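/- Let k ≥ 1 and let p > k be a prime. Let G be a finite simple graph that is connected, k-improved, and has no separating clique. If γ and γ' are commuting automorphisms of G, each of order p, then fix(γ) ∪ fix(γ') is a clique in G. -/

import Mathlib

open SimpleGraph

/-- Two walks between the same endpoints are *internally disjoint* if they share
no vertices other than the two endpoints. -/
def InternallyDisjoint {V : Type*} {G : SimpleGraph V} {u v : V}
    (P Q : G.Walk u v) : Prop :=
  ∀ w, w ∈ P.support → w ∈ Q.support → w = u ∨ w = v

/-- A graph is *k-improved* if every two distinct nonadjacent vertices are joined by
at most `k` pairwise internally vertex-disjoint paths. -/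
def IsKImproved {V : Type*} (G : SimpleGraph V) (k : ℕ) : Prop :=
  ∀ u v : V, u ≠ v → ¬ G.Adj u v →
    ∀ (n : ℕ) (f : Fin n → G.Path u v), Function.Injective f →
      (∀ i j : Fin n, i ≠ j → InternallyDisjoint (f i).val (f j).val) → n ≤ k

/-- `G` has no separating clique: removing any clique leaves a (pre)connected graph. -/
def NoSeparatingClique {V : Type*} (G : SimpleGraph V) : Prop :=
  ∀ S : Set V, G.IsClique S → (G.induce (Sᶜ : Set V)).Preconnected

/-- The permutation `γ` is an automorphism of the graph `G`. -/
def IsGraphAutomorphism {V : Type*} (G : SimpleGraph V) (γ : Equiv.Perm V) : Prop :=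
  ∀ u v : V, G.Adj (γ u) (γ v) ↔ G.Adj u v


section Aux
variable {V : Type*} {G : SimpleGraph V} {δ : Equiv.Perm V} {p : ℕ}

lemma fix_pow {x : V} (h : δ x = x) : ∀ n : ℕ, (δ ^ n) x = x := by
  intro n; induction n with
  | zero => simp
  | succ n ih => rw [pow_succ, Equiv.Perm.mul_apply, h, ih]

lemma zfix {g : Equiv.Perm V} {x : V} (h : g x = x) : ∀ z : ℤ, (g ^ z) x = x := by
  intro z
  cases z with
  | ofNat n => simpa using fix_pow h n
  | negSucc n =>
      have h1 : (g ^ (n+1)) x = x := fix_pow h (n+1)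
      have := congrArg (⇑(g ^ (n+1))⁻¹) h1
      simp only [Equiv.Perm.inv_def, Equiv.symm_apply_apply] at this
      rw [zpow_negSucc]
      exact this.symm

lemma fix_of_pow_fix (hp : p.Prime) (hord : orderOf δ = p) {n : ℕ} {x : V}
    (hn : ¬ p ∣ n) (h : (δ ^ n) x = x) : δ x = x := by
  have hco : Nat.Coprime p n := (Nat.Prime.coprime_iff_not_dvd hp).mpr hn
  have hbez : (1:ℤ) = p * Nat.gcdA p n + n * Nat.gcdB p n := by
    have h2 := Nat.gcd_eq_gcd_ab p n
    rw [hco] at h2; exact_mod_cast h2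
  have hp1 : δ ^ p = 1 := by rw [← hord]; exact pow_orderOf_eq_one δ
  have h1 : (δ ^ (1:ℤ)) x = x := by
    rw [hbez, zpow_add, zpow_mul, zpow_mul, zpow_natCast, zpow_natCast, hp1,
      one_zpow, one_mul]
    exact zfix h _
  simpa using h1

lemma fixed_of_pow_eq (hp : p.Prime) (hord : orderOf δ = p) {i j : ℕ} {x : V}
    (hij : i < j) (hj : j < p) (h : (δ ^ i) x = (δ ^ j) x) : δ x = x := by
  have hd : j = i + (j - i) := by omega
  rw [hd, pow_add, Equiv.Perm.mul_apply] at h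
  have hx : (δ ^ (j - i)) x = x := ((δ ^ i).injective h).symm
  refine fix_of_pow_fix hp hord ?_ hx
  intro hdvd
  have := Nat.le_of_dvd (by omega) hdvd
  omega

lemma fix_pow_apply_iff {n : ℕ} {x : V} : δ ((δ ^ n) x) = (δ ^ n) x ↔ δ x = x := by
  have h1 : δ ((δ ^ n) x) = (δ ^ n) (δ x) := by
    rw [← Equiv.Perm.mul_apply, ← Equiv.Perm.mul_apply, ← pow_succ, ← pow_succ']
  rw [h1]
  exact (δ ^ n).injective.eq_iff

lemma orbit_back (hp1 : δ ^ p = 1) (hp0 : 0 < p) (n : ℕ) (x : V) :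
    (δ ^ (n * (p - 1))) ((δ ^ n) x) = x := by
  rw [← Equiv.Perm.mul_apply, ← pow_add]
  have h2 : n * (p - 1) + n = p * n := by
    cases p with
    | zero => omega
    | succ q => simp [Nat.succ_sub_one, Nat.succ_mul, Nat.mul_succ]; ring
  rw [h2, pow_mul, hp1, one_pow, Equiv.Perm.one_apply]

end Aux
section Aux2
variable {V : Type*} {G : SimpleGraph V} {δ : Equiv.Perm V} {p : ℕ}

/-- `x` and `y` lie in the same `δ`-orbit. -/
def SameOrb (δ : Equiv.Perm V) (x y : V) : Prop := ∃ n : ℕ, (δ ^ n) x = y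

lemma sameOrb_refl (x : V) : SameOrb δ x x := ⟨0, by simp⟩

lemma sameOrb_symm (hp1 : δ ^ p = 1) (hp0 : 0 < p) {x y : V}
    (h : SameOrb δ x y) : SameOrb δ y x := by
  obtain ⟨n, rfl⟩ := h
  exact ⟨n * (p - 1), orbit_back hp1 hp0 n x⟩

lemma sameOrb_trans {x y z : V} (h1 : SameOrb δ x y) (h2 : SameOrb δ y z) :
    SameOrb δ x z := by
  obtain ⟨n, rfl⟩ := h1
  obtain ⟨m, rfl⟩ := h2
  exact ⟨m + n, by rw [pow_add, Equiv.Perm.mul_apply]⟩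

lemma adjPow (hδ : IsGraphAutomorphism G δ) (n : ℕ) (x y : V) :
    G.Adj ((δ ^ n) x) ((δ ^ n) y) ↔ G.Adj x y := by
  induction n with
  | zero => simp
  | succ n ih =>
      rw [pow_succ', Equiv.Perm.mul_apply, Equiv.Perm.mul_apply, hδ]
      exact ih

/-- The graph homomorphism given by `δ ^ n`. -/
def homPow (hδ : IsGraphAutomorphism G δ) (n : ℕ) : G →g G where
  toFun := ⇑(δ ^ n)
  map_rel' := fun h => (adjPow hδ n _ _).mpr h

@[simp] lemma homPow_apply (hδ : IsGraphAutomorphism G δ) (n : ℕ) (x : V) :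
    homPow hδ n x = (δ ^ n) x := rfl

/-- One step of quotient-adjacency towards a non-fixed vertex. -/
def QRel (G : SimpleGraph V) (δ : Equiv.Perm V) (x y : V) : Prop :=
  δ y ≠ y ∧ (SameOrb δ x y ∨ ∃ m : ℕ, G.Adj x ((δ ^ m) y))

lemma qrel_symm (hδ : IsGraphAutomorphism G δ) (hp1 : δ ^ p = 1) (hp0 : 0 < p)
    {x y : V} (hx : δ x ≠ x) (h : QRel G δ x y) : QRel G δ y x := by
  obtain ⟨hy, horb | ⟨m, hadj⟩⟩ := h
  · exact ⟨hx, Or.inl (sameOrb_symm hp1 hp0 horb)⟩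
  · refine ⟨hx, Or.inr ⟨m * (p - 1), ?_⟩⟩
    have h2 := (adjPow hδ (m * (p-1)) _ _).mpr hadj
    rw [orbit_back hp1 hp0 m y] at h2
    exact h2.symm

end Aux2
section Aux3
variable {V : Type*} {G : SimpleGraph V} {δ : Equiv.Perm V} {p : ℕ}

lemma qrel_chain_nonfixed {w z : V} (hw : δ w ≠ w)
    (h : Relation.ReflTransGen (QRel G δ) w z) : δ z ≠ z := by
  induction h with
  | refl => exact hw
  | tail _ hstep _ => exact hstep.1

lemma qrel_reverse (hδ : IsGraphAutomorphism G δ) (hp1 : δ ^ p = 1) (hp0 : 0 < p)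
    {w z : V} (hw : δ w ≠ w) (h : Relation.ReflTransGen (QRel G δ) w z) :
    Relation.ReflTransGen (QRel G δ) z w := by
  induction h with
  | refl => exact Relation.ReflTransGen.refl
  | @tail b c _ hstep ih =>
      have hb : δ b ≠ b := qrel_chain_nonfixed hw (by assumption)
      exact Relation.ReflTransGen.head (qrel_symm hδ hp1 hp0 hb hstep) ih

lemma lift_walk (hδ : IsGraphAutomorphism G δ) (hp1 : δ ^ p = 1) (hp0 : 0 < p)
    {x y : V} (h : Relation.ReflTransGen (QRel G δ) x y) (hx : δ x ≠ x) :
    ∃ d : V, SameOrb δ y d ∧ ∃ W : G.Walk x d, ∀ w ∈ W.support, δ w ≠ w := by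
  induction h with
  | refl =>
      refine ⟨x, sameOrb_refl x, Walk.nil, ?_⟩
      intro w hw
      simp only [Walk.support_nil, List.mem_singleton] at hw
      subst hw; exact hx
  | @tail z z' _ hstep ih =>
      obtain ⟨d, ⟨s, hs⟩, W, hWsupp⟩ := ih
      obtain ⟨hz', horb | ⟨m, hadj⟩⟩ := hstep
      · -- same orbit step: keep the walk
        obtain ⟨n, hn⟩ := horb
        refine ⟨d, ⟨s + n * (p-1), ?_⟩, W, hWsupp⟩
        rw [← hn, ← Equiv.Perm.mul_apply, ← pow_add]
        have : (δ ^ (s + n * (p-1) + n)) z = (δ ^ s) ((δ ^ (n * (p-1))) ((δ ^ n) z)) := by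
          rw [← Equiv.Perm.mul_apply, ← Equiv.Perm.mul_apply, ← pow_add, ← pow_add]
        rw [this, orbit_back hp1 hp0 n z, hs]
      · -- adjacency step: extend the walk
        have hadj2 : G.Adj ((δ ^ s) z) ((δ ^ s) ((δ ^ m) z')) := (adjPow hδ s _ _).mpr hadj
        rw [hs] at hadj2
        have hd'' : (δ ^ s) ((δ ^ m) z') = (δ ^ (s + m)) z' := by
          rw [← Equiv.Perm.mul_apply, ← pow_add]
        refine ⟨(δ ^ (s + m)) z', ⟨s + m, rfl⟩, W.concat (hd'' ▸ hadj2), ?_⟩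
        intro w hw
        rw [Walk.support_concat, List.mem_append] at hw
        rcases hw with hw | hw
        · exact hWsupp w hw
        · simp only [List.mem_singleton] at hw
          subst hw
          exact fun hfix => hz' (fix_pow_apply_iff.mp hfix)

lemma reach_in_D {S : Set V} (Dset : Set V)
    (hclosed : ∀ x ∈ Dset, ∀ z, G.Adj x z → z ∈ Dset ∨ z ∈ S) :
    ∀ (a b : ↥(Sᶜ)), (G.induce (Sᶜ : Set V)).Walk a b → (a : V) ∈ Dset → (b : V) ∈ Dset := by
  intro a b W
  induction W with
  | nil => exact id
  | @cons a c b hadj W ih =>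
      intro ha
      apply ih
      have hGadj : G.Adj (a : V) (c : V) := hadj
      rcases hclosed _ ha _ hGadj with h | h
      · exact h
      · exact absurd h c.2

end Aux3
section Aux4
variable {V : Type*} {G : SimpleGraph V} {δ : Equiv.Perm V} {p : ℕ}

open SimpleGraph

lemma surgery (hδ : IsGraphAutomorphism G δ) (hp1 : δ ^ p = 1) (hp0 : 0 < p)
    {a b : V} (hb : δ b = b) (W : G.Walk a b)
    (hinv : ∀ w ∈ W.support, δ w = w → w = a ∨ w = b)
    {x y : V} (hx : x ∈ W.support) (hxy : x ≠ y) (horb : SameOrb δ x y)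
    (hy : y ∈ W.support) :
    ∃ W' : G.Walk a b, W'.length < W.length ∧
      (∀ w ∈ W'.support, δ w = w → w = a ∨ w = b) := by
  classical
  obtain ⟨n, hn⟩ := horb
  set T := W.takeUntil x hx with hT
  set Drop := W.dropUntil x hx with hDrop
  have hspec : T.append Drop = W := W.take_spec hx
  have hlen : T.length + Drop.length = W.length := by
    rw [← hspec, Walk.length_append]
  have hy2 : y ∈ T.support ∨ y ∈ Drop.support := by
    rw [← hspec, Walk.mem_support_append_iff] at hy; exact hy
  have hinvT : ∀ w ∈ T.support, δ w = w → w = a ∨ w = b :=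
    fun w hw => hinv w (W.support_takeUntil_subset hx hw)
  have hinvD : ∀ w ∈ Drop.support, δ w = w → w = a ∨ w = b :=
    fun w hw => hinv w (W.support_dropUntil_subset hx hw)
  have hmapinv : ∀ (m : ℕ) (w' : V), δ w' = w' → w' = a ∨ w' = b →
      (δ ^ m) w' = a ∨ (δ ^ m) w' = b := by
    intro m w' hfw hab
    rcases hab with rfl | rfl
    · exact Or.inl (fix_pow hfw m)
    · exact Or.inr (fix_pow hb m)
  rcases hy2 with hyT | hyD
  · -- y occurs before x : cut T at y and shift Drop by δ^n
    set T1 := T.takeUntil y hyT with hT1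
    have hTspec : T1.append (T.dropUntil y hyT) = T := T.take_spec hyT
    have hTlen : T1.length + (T.dropUntil y hyT).length = T.length := by
      have h := congrArg Walk.length hTspec
      rwa [Walk.length_append] at h
    have hdtpos : (T.dropUntil y hyT).length ≠ 0 := by
      intro h0
      exact hxy (Walk.eq_of_length_eq_zero h0).symm
    have hnb : (δ ^ n) b = b := fix_pow hb n
    set mapped := (Drop.map (homPow hδ n)).copy ((homPow_apply hδ n x).trans hn)
      ((homPow_apply hδ n b).trans hnb) with hmapped
    refine ⟨T1.append mapped, ?_, ?_⟩
    · rw [Walk.length_append, hmapped, Walk.length_copy, Walk.length_map]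
      omega
    · intro w hw hfix
      rw [Walk.mem_support_append_iff] at hw
      rcases hw with hw | hw
      · exact hinvT w (T.support_takeUntil_subset hyT hw) hfix
      · rw [hmapped, Walk.support_copy, Walk.support_map, List.mem_map] at hw
        obtain ⟨w', hw', rfl⟩ := hw
        have hfw' : δ w' = w' := fix_pow_apply_iff.mp hfix
        exact hmapinv n w' hfw' (hinvD w' hw' hfw')
  · -- y occurs after x : cut Drop at y and shift the tail back to x
    set D2 := Drop.dropUntil y hyD with hD2
    have hDspec : (Drop.takeUntil y hyD).append D2 = Drop := Drop.take_spec hyD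
    have hDlen : (Drop.takeUntil y hyD).length + D2.length = Drop.length := by
      have h := congrArg Walk.length hDspec
      rwa [Walk.length_append] at h
    have htkpos : (Drop.takeUntil y hyD).length ≠ 0 := by
      intro h0
      exact hxy (Walk.eq_of_length_eq_zero h0)
    set m := n * (p - 1) with hm
    have hmy : (δ ^ m) y = x := by rw [← hn]; exact orbit_back hp1 hp0 n x
    have hmb : (δ ^ m) b = b := fix_pow hb m
    set mapped := (D2.map (homPow hδ m)).copy ((homPow_apply hδ m y).trans hmy)
      ((homPow_apply hδ m b).trans hmb) with hmapped
    refine ⟨T.append mapped, ?_, ?_⟩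
    · rw [Walk.length_append, hmapped, Walk.length_copy, Walk.length_map]
      omega
    · intro w hw hfix
      rw [Walk.mem_support_append_iff] at hw
      rcases hw with hw | hw
      · exact hinvT w hw hfix
      · rw [hmapped, Walk.support_copy, Walk.support_map, List.mem_map] at hw
        obtain ⟨w', hw', rfl⟩ := hw
        have hfw' : δ w' = w' := fix_pow_apply_iff.mp hfix
        exact hmapinv m w' hfw'
          (hinvD w' (Drop.support_dropUntil_subset hyD hw') hfw')

lemma exists_orbitPath (hδ : IsGraphAutomorphism G δ) (hp1 : δ ^ p = 1) (hp0 : 0 < p)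
    {a b : V} (hb : δ b = b) :
    ∀ (N : ℕ) (W : G.Walk a b), W.length ≤ N →
      (∀ w ∈ W.support, δ w = w → w = a ∨ w = b) →
      ∃ P : G.Walk a b, P.IsPath ∧
        (∀ x ∈ P.support, ∀ y ∈ P.support, SameOrb δ x y → x = y) ∧
        (∀ w ∈ P.support, δ w = w → w = a ∨ w = b) := by
  classical
  intro N
  induction N with
  | zero =>
      intro W hlen hinv
      by_cases hbad : ∃ x ∈ W.bypass.support, ∃ y ∈ W.bypass.support, x ≠ y ∧ SameOrb δ x y
      · obtain ⟨x, hx, y, hy, hxy, horb⟩ := hbad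
        obtain ⟨W2, hW2, _⟩ := surgery hδ hp1 hp0 hb W.bypass
          (fun w hw => hinv w (W.support_bypass_subset hw)) hx hxy horb hy
        have := W.length_bypass_le
        omega
      · push_neg at hbad
        refine ⟨W.bypass, W.bypass_isPath, ?_, fun w hw => hinv w (W.support_bypass_subset hw)⟩
        intro x hx y hy horb
        by_contra hne
        exact (hbad x hx y hy hne) horb
  | succ N ih =>
      intro W hlen hinv
      by_cases hbad : ∃ x ∈ W.bypass.support, ∃ y ∈ W.bypass.support, x ≠ y ∧ SameOrb δ x y
      · obtain ⟨x, hx, y, hy, hxy, horb⟩ := hbad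
        obtain ⟨W2, hW2, hinv2⟩ := surgery hδ hp1 hp0 hb W.bypass
          (fun w hw => hinv w (W.support_bypass_subset hw)) hx hxy horb hy
        have := W.length_bypass_le
        exact ih W2 (by omega) hinv2
      · push_neg at hbad
        refine ⟨W.bypass, W.bypass_isPath, ?_, fun w hw => hinv w (W.support_bypass_subset hw)⟩
        intro x hx y hy horb
        by_contra hne
        exact (hbad x hx y hy hne) horb

end Aux4
section Aux5
variable {V : Type*} {G : SimpleGraph V} {δ : Equiv.Perm V} {p k : ℕ}

open SimpleGraph

lemma sameOrb_of_pow_eq (hp1 : δ ^ p = 1) (hp0 : 0 < p) {i j : ℕ} {x y : V}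
    (h : (δ ^ i) x = (δ ^ j) y) : SameOrb δ y x := by
  refine ⟨i * (p - 1) + j, ?_⟩
  have : (δ ^ (i * (p-1) + j)) y = (δ ^ (i * (p-1))) ((δ ^ j) y) := by
    rw [← Equiv.Perm.mul_apply, ← pow_add, Nat.add_comm]
  rw [this, ← h]
  exact orbit_back hp1 hp0 i x

lemma exists_internal {a b : V} (hab : a ≠ b) (hnadj : ¬ G.Adj a b) (P : G.Walk a b) :
    ∃ w₀ ∈ P.support, w₀ ≠ a ∧ w₀ ≠ b := by
  cases P with
  | nil => exact absurd rfl hab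
  | @cons _ c _ h q =>
      refine ⟨c, ?_, h.ne', ?_⟩
      · rw [Walk.support_cons]
        exact List.mem_cons_of_mem _ q.start_mem_support
      · rintro rfl; exact hnadj h

lemma key_eq (hp : p.Prime) (hord : orderOf δ = p)
    {a b : V} (P : G.Walk a b)
    (hdis : ∀ x ∈ P.support, ∀ y ∈ P.support, SameOrb δ x y → x = y)
    {i j : ℕ} (hi : i < p) (hj : j < p) {x y : V} (hx : x ∈ P.support)
    (hy : y ∈ P.support) (h : (δ ^ i) x = (δ ^ j) y) :
    x = y ∧ (i ≠ j → δ x = x) := by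
  have hp1 : δ ^ p = 1 := by rw [← hord]; exact pow_orderOf_eq_one δ
  have hp0 : 0 < p := hp.pos
  have hxy : y = x := hdis y hy x hx (sameOrb_of_pow_eq hp1 hp0 h)
  subst hxy
  refine ⟨rfl, fun hij => ?_⟩
  rcases Nat.lt_trichotomy i j with hlt | heq | hlt
  · exact fixed_of_pow_eq hp hord hlt hj h
  · exact absurd heq hij
  · exact fixed_of_pow_eq hp hord hlt hi h.symm

lemma pure_core (himp : IsKImproved G k) (hδ : IsGraphAutomorphism G δ)
    (hp : p.Prime) (hord : orderOf δ = p) (hkp : k < p)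
    {a b : V} (hab : a ≠ b) (hnadj : ¬ G.Adj a b) (ha : δ a = a) (hb : δ b = b)
    (P : G.Walk a b) (hP : P.IsPath)
    (hdis : ∀ x ∈ P.support, ∀ y ∈ P.support, SameOrb δ x y → x = y)
    (hinv : ∀ w ∈ P.support, δ w = w → w = a ∨ w = b) : False := by
  have hinjp : ∀ n : ℕ, Function.Injective (homPow hδ n) := by
    intro n x y hxy
    exact (δ ^ n).injective hxy
  set f : Fin p → G.Path a b := fun i =>
    ⟨(P.map (homPow hδ (i : ℕ))).copy ((homPow_apply hδ _ a).trans (fix_pow ha _))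
      ((homPow_apply hδ _ b).trans (fix_pow hb _)), by
      rw [Walk.isPath_copy]
      exact Walk.map_isPath_of_injective (hinjp _) hP⟩ with hf
  have hsupp : ∀ (i : Fin p) (w : V),
      w ∈ ((f i : G.Path a b) : G.Walk a b).support ↔
        ∃ x ∈ P.support, (δ ^ (i : ℕ)) x = w := by
    intro i w
    simp only [hf]
    rw [Walk.support_copy, Walk.support_map, List.mem_map]
    simp
  obtain ⟨w₀, hw₀, hw₀a, hw₀b⟩ := exists_internal hab hnadj P
  have hw₀fix : δ w₀ ≠ w₀ := fun h => by
    rcases hinv w₀ hw₀ h with h' | h' <;> [exact hw₀a h'; exact hw₀b h']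
  have hinj : Function.Injective f := by
    intro i j hfeq
    by_contra hne
    have hij : (i : ℕ) ≠ (j : ℕ) := fun h => hne (Fin.ext h)
    have h1 : (δ ^ (i : ℕ)) w₀ ∈ ((f j : G.Path a b) : G.Walk a b).support := by
      rw [← hfeq, hsupp]
      exact ⟨w₀, hw₀, rfl⟩
    rw [hsupp] at h1
    obtain ⟨y, hy, hyw⟩ := h1
    have := key_eq hp hord P hdis j.isLt i.isLt hy hw₀ hyw
    exact hw₀fix (this.1 ▸ this.2 (fun h => hij h.symm))
  have hdisj : ∀ i j : Fin p, i ≠ j → InternallyDisjoint (f i).val (f j).val := by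
    intro i j hij w hwi hwj
    rw [hsupp] at hwi hwj
    obtain ⟨x, hx, hxw⟩ := hwi
    obtain ⟨y, hy, hyw⟩ := hwj
    have hij' : (i : ℕ) ≠ (j : ℕ) := fun h => hij (Fin.ext h)
    have hk := key_eq hp hord P hdis i.isLt j.isLt hx hy (hxw.trans hyw.symm)
    have hxfix : δ x = x := hk.2 hij'
    rcases hinv x hx hxfix with rfl | rfl
    · exact Or.inl (by rw [← hxw]; exact fix_pow ha _)
    · exact Or.inr (by rw [← hxw]; exact fix_pow hb _)
  have := himp a b hab hnadj p f hinj hdisj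
  omega

end Aux5
section Aux6
variable {V : Type*} {G : SimpleGraph V} {δ : Equiv.Perm V} {p k : ℕ}

open SimpleGraph

lemma mixed_core (himp : IsKImproved G k) (hδ : IsGraphAutomorphism G δ)
    (hp : p.Prime) (hord : orderOf δ = p) (hkp : k < p)
    {u v : V} (huv : u ≠ v) (hnadj : ¬ G.Adj u v) (hu : δ u ≠ u) (hv : δ v = v)
    (hedge : ∀ i : ℕ, 0 < i → i < p → G.Adj u ((δ ^ i) u))
    (P : G.Walk u v) (hP : P.IsPath)
    (hdis : ∀ x ∈ P.support, ∀ y ∈ P.support, SameOrb δ x y → x = y)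
    (hinv : ∀ w ∈ P.support, δ w = w → w = v) : False := by
  have hinjp : ∀ n : ℕ, Function.Injective (homPow hδ n) := fun n x y hxy =>
    (δ ^ n).injective hxy
  have hmappath : ∀ i : Fin p, (i : ℕ) ≠ 0 →
      u ∉ ((P.map (homPow hδ (i : ℕ))).copy (homPow_apply hδ _ u) ((homPow_apply hδ _ v).trans (fix_pow hv _))).support := by
    intro i hi0 husup
    rw [Walk.support_copy, Walk.support_map, List.mem_map] at husup
    obtain ⟨x, hx, hxu⟩ := husup
    have hxu' : (δ ^ (i : ℕ)) x = (δ ^ (0 : ℕ)) u := by simpa using hxu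
    have hk := key_eq hp hord P hdis i.isLt hp.pos hx P.start_mem_support hxu'
    exact hu (hk.1 ▸ hk.2 hi0)
  set f : Fin p → G.Path u v := fun i =>
    if h0 : (i : ℕ) = 0 then ⟨P, hP⟩
    else ⟨Walk.cons (hedge (i : ℕ) (Nat.pos_of_ne_zero h0) i.isLt)
        ((P.map (homPow hδ (i : ℕ))).copy (homPow_apply hδ _ u) ((homPow_apply hδ _ v).trans (fix_pow hv _))), by
      rw [Walk.cons_isPath_iff]
      exact ⟨by rw [Walk.isPath_copy]; exact Walk.map_isPath_of_injective (hinjp _) hP,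
        hmappath i h0⟩⟩ with hf
  have hsupp : ∀ (i : Fin p) (w : V),
      w ∈ ((f i : G.Path u v) : G.Walk u v).support ↔
        (w = u ∨ ∃ x ∈ P.support, (δ ^ (i : ℕ)) x = w) := by
    intro i w
    by_cases h0 : (i : ℕ) = 0
    · rw [hf]
      simp only [h0, dif_pos]
      constructor
      · intro hw
        exact Or.inr ⟨w, hw, by simp [h0]⟩
      · rintro (rfl | ⟨x, hx, hxw⟩)
        · exact P.start_mem_support
        · simpa [← hxw] using hx
    · rw [hf]
      simp only [dif_neg h0]
      rw [Walk.support_cons, List.mem_cons, Walk.support_copy, Walk.support_map, List.mem_map]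
      simp
  obtain ⟨w₀, hw₀, hw₀u, hw₀v⟩ := exists_internal huv hnadj P
  have hw₀fix : δ w₀ ≠ w₀ := fun h => hw₀v (hinv w₀ hw₀ h)
  have horbu : ∀ (i : ℕ), i < p → ∀ x ∈ P.support, (δ ^ i) x = u → x = u := by
    intro i hi x hx hxu
    have hxu' : (δ ^ i) x = (δ ^ (0:ℕ)) u := by simpa using hxu
    exact (key_eq hp hord P hdis hi hp.pos hx P.start_mem_support hxu').1
  have hinj : Function.Injective f := by
    intro i j hfeq
    by_contra hne
    have hij : (i : ℕ) ≠ (j : ℕ) := fun h => hne (Fin.ext h)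
    have h1 : (δ ^ (i : ℕ)) w₀ ∈ ((f j : G.Path u v) : G.Walk u v).support := by
      rw [← hfeq, hsupp]
      exact Or.inr ⟨w₀, hw₀, rfl⟩
    rw [hsupp] at h1
    rcases h1 with h1 | ⟨y, hy, hyw⟩
    · exact hw₀u (horbu _ i.isLt w₀ hw₀ h1)
    · have hk := key_eq hp hord P hdis j.isLt i.isLt hy hw₀ hyw
      exact hw₀fix (hk.1 ▸ hk.2 (fun h => hij h.symm))
  have hdisj : ∀ i j : Fin p, i ≠ j → InternallyDisjoint (f i).val (f j).val := by
    intro i j hij w hwi hwj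
    rw [hsupp] at hwi hwj
    rcases hwi with rfl | ⟨x, hx, hxw⟩
    · exact Or.inl rfl
    rcases hwj with hwu | ⟨y, hy, hyw⟩
    · exact Or.inl hwu
    have hij' : (i : ℕ) ≠ (j : ℕ) := fun h => hij (Fin.ext h)
    have hk := key_eq hp hord P hdis i.isLt j.isLt hx hy (hxw.trans hyw.symm)
    have hxv : x = v := hinv x hx (hk.2 hij')
    subst hxv
    exact Or.inr (by rw [← hxw]; exact fix_pow hv _)
  have := himp u v huv hnadj p f hinj hdisj
  omega

end Aux6
section Aux7
variable {V : Type*} {G : SimpleGraph V} {p k : ℕ}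

open SimpleGraph

lemma fix_clique (himp : IsKImproved G k) (hsep : NoSeparatingClique G)
    {δ : Equiv.Perm V} (hδ : IsGraphAutomorphism G δ)
    (hp : p.Prime) (hord : orderOf δ = p) (hkp : k < p) :
    G.IsClique {x : V | δ x = x} := by
  have hp1 : δ ^ p = 1 := by rw [← hord]; exact pow_orderOf_eq_one δ
  have hp0 : 0 < p := hp.pos
  rw [SimpleGraph.isClique_iff]
  intro u hu v hv hne
  by_contra hnadj
  have hδne : ∃ x₀ : V, δ x₀ ≠ x₀ := by
    by_contra h
    push_neg at h
    have hone : δ = 1 := Equiv.ext (fun x => h x)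
    rw [hone, orderOf_one] at hord
    exact hp.ne_one hord.symm
  obtain ⟨x₀, hx₀⟩ := hδne
  set Dset := {x : V | δ x ≠ x ∧ Relation.ReflTransGen (QRel G δ) x₀ x} with hDset
  set S := {w : V | δ w = w ∧ ∃ x ∈ Dset, G.Adj x w} with hSdef
  have hclosed : ∀ x ∈ Dset, ∀ z, G.Adj x z → z ∈ Dset ∨ z ∈ S := by
    intro x hx z hadj
    by_cases hz : δ z = z
    · exact Or.inr ⟨hz, x, hx, hadj⟩
    · exact Or.inl ⟨hz, hx.2.tail ⟨hz, Or.inr ⟨0, by simpa using hadj⟩⟩⟩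
  by_cases hSc : G.IsClique S
  · have hpre := hsep S hSc
    have hx₀S : x₀ ∉ S := fun h => hx₀ h.1
    have hclaim : ∀ w, w ∉ S → w ∈ Dset := by
      intro w hw
      obtain ⟨W⟩ := hpre ⟨x₀, hx₀S⟩ ⟨w, hw⟩
      exact reach_in_D Dset hclosed _ _ W ⟨hx₀, Relation.ReflTransGen.refl⟩
    have huS : u ∈ S := by
      by_contra h
      exact (hclaim u h).1 hu
    have hvS : v ∈ S := by
      by_contra h
      exact (hclaim v h).1 hv
    exact hnadj (hSc huS hvS hne)
  · rw [SimpleGraph.isClique_iff] at hSc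
    unfold Set.Pairwise at hSc
    push_neg at hSc
    obtain ⟨a, haS, b, hbS, hab, hnadj2⟩ := hSc
    obtain ⟨hafix, x, hxD, hxa⟩ := haS
    obtain ⟨hbfix, y, hyD, hyb⟩ := hbS
    have hchain : Relation.ReflTransGen (QRel G δ) x y :=
      (qrel_reverse hδ hp1 hp0 hx₀ hxD.2).trans hyD.2
    obtain ⟨d, ⟨s, hs⟩, W, hWsupp⟩ := lift_walk hδ hp1 hp0 hchain hxD.1
    have hdb : G.Adj d b := by
      have h2 := (adjPow hδ s _ _).mpr hyb
      rwa [hs, fix_pow hbfix s] at h2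
    set Wfull := Walk.cons hxa.symm (W.concat hdb) with hWfull
    have hinvfull : ∀ w ∈ Wfull.support, δ w = w → w = a ∨ w = b := by
      intro w hw hfix
      rw [hWfull, Walk.support_cons, List.mem_cons] at hw
      rcases hw with rfl | hw
      · exact Or.inl rfl
      · rw [Walk.support_concat, List.mem_append] at hw
        rcases hw with hw | hw
        · exact absurd hfix (hWsupp w hw)
        · simp only [List.mem_singleton] at hw
          exact Or.inr hw
    obtain ⟨P, hPpath, hPdis, hPinv⟩ :=
      exists_orbitPath hδ hp1 hp0 hbfix Wfull.length Wfull le_rfl hinvfull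
    exact pure_core himp hδ hp hord hkp hab hnadj2 hafix hbfix P hPpath hPdis hPinv

lemma mixed_false (himp : IsKImproved G k) (hsep : NoSeparatingClique G)
    {γ γ' : Equiv.Perm V}
    (hγ : IsGraphAutomorphism G γ) (hγ' : IsGraphAutomorphism G γ')
    (hcomm : γ * γ' = γ' * γ)
    (hp : p.Prime) (hord' : orderOf γ' = p) (hkp : k < p)
    (hKclique : G.IsClique {x : V | γ x = x})
    {u v : V} (hγu : γ u = u) (hγ'u : γ' u ≠ u) (hγ'v : γ' v = v)
    (hne : u ≠ v) (hnadj : ¬ G.Adj u v) : False := by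
  have hp1 : γ' ^ p = 1 := by rw [← hord']; exact pow_orderOf_eq_one γ'
  have hp0 : 0 < p := hp.pos
  have hK' : G.IsClique {x : V | γ' x = x} := fix_clique himp hsep hγ' hp hord' hkp
  set Dset := {x : V | γ' x ≠ x ∧ Relation.ReflTransGen (QRel G γ') u x} with hDset
  set S := {w : V | γ' w = w ∧ ∃ x ∈ Dset, G.Adj x w} with hSdef
  have hSsub : S ⊆ {x : V | γ' x = x} := fun w hw => hw.1
  have hSc : G.IsClique S := hK'.subset hSsub
  have hclosed : ∀ x ∈ Dset, ∀ z, G.Adj x z → z ∈ Dset ∨ z ∈ S := by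
    intro x hx z hadj
    by_cases hz : γ' z = z
    · exact Or.inr ⟨hz, x, hx, hadj⟩
    · exact Or.inl ⟨hz, hx.2.tail ⟨hz, Or.inr ⟨0, by simpa using hadj⟩⟩⟩
  have hpre := hsep S hSc
  have huS : u ∉ S := fun h => hγ'u h.1
  have hclaim : ∀ w, w ∉ S → w ∈ Dset := by
    intro w hw
    obtain ⟨W⟩ := hpre ⟨u, huS⟩ ⟨w, hw⟩
    exact reach_in_D Dset hclosed _ _ W ⟨hγ'u, Relation.ReflTransGen.refl⟩
  have hvS : v ∈ S := by
    by_contra h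
    exact absurd hγ'v (hclaim v h).1
  obtain ⟨_, y, hyD, hyv⟩ := hvS
  obtain ⟨d, ⟨s, hs⟩, W, hWsupp⟩ := lift_walk hγ' hp1 hp0 hyD.2 hγ'u
  have hdv : G.Adj d v := by
    have h2 := (adjPow hγ' s _ _).mpr hyv
    rwa [hs, fix_pow hγ'v s] at h2
  set Wfull := W.concat hdv with hWfull
  have hinvfull : ∀ w ∈ Wfull.support, γ' w = w → w = u ∨ w = v := by
    intro w hw hfix
    rw [hWfull, Walk.support_concat, List.mem_append] at hw
    rcases hw with hw | hw
    · exact absurd hfix (hWsupp w hw)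
    · simp only [List.mem_singleton] at hw
      exact Or.inr hw
  obtain ⟨P, hPpath, hPdis, hPinv⟩ :=
    exists_orbitPath hγ' hp1 hp0 hγ'v Wfull.length Wfull le_rfl hinvfull
  have hPinv' : ∀ w ∈ P.support, γ' w = w → w = v := by
    intro w hw hfix
    rcases hPinv w hw hfix with rfl | h
    · exact absurd hfix hγ'u
    · exact h
  have hedge : ∀ i : ℕ, 0 < i → i < p → G.Adj u ((γ' ^ i) u) := by
    intro i hipos hilt
    have hcommc : Commute γ γ' := hcomm
    have hmem : γ ((γ' ^ i) u) = (γ' ^ i) u := by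
      have h2 : (γ * γ' ^ i) u = (γ' ^ i * γ) u := by
        rw [(hcommc.pow_right i).eq]
      rw [Equiv.Perm.mul_apply, Equiv.Perm.mul_apply, hγu] at h2
      exact h2
    have hne2 : u ≠ (γ' ^ i) u := by
      intro h
      have h0 : (γ' ^ (0:ℕ)) u = (γ' ^ i) u := by simpa using h
      exact hγ'u (fixed_of_pow_eq hp hord' hipos hilt h0)
    exact hKclique hγu hmem hne2
  exact mixed_core himp hγ' hp hord' hkp hne hnadj hγ'u hγ'v hedge P hPpath hPdis hPinv'

end Aux7
theorem stmt1 {V : Type*} [Fintype V] (G : SimpleGraph V) (k p : ℕ)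
    (hk : 1 ≤ k) (hp : p.Prime) (hpk : k < p)
    (hconn : G.Connected) (himp : IsKImproved G k) (hsep : NoSeparatingClique G)
    (γ γ' : Equiv.Perm V)
    (hγ : IsGraphAutomorphism G γ) (hγ' : IsGraphAutomorphism G γ')
    (hcomm : γ * γ' = γ' * γ)
    (hord : orderOf γ = p) (hord' : orderOf γ' = p) :
    G.IsClique ({v : V | γ v = v} ∪ {v : V | γ' v = v}) := by
  have hK : G.IsClique {x : V | γ x = x} := fix_clique himp hsep hγ hp hord hpk
  have hK' : G.IsClique {x : V | γ' x = x} := fix_clique himp hsep hγ' hp hord' hpk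
  have hcomm' : γ' * γ = γ * γ' := hcomm.symm
  rw [SimpleGraph.isClique_iff]
  intro x hx y hy hne
  rcases hx with hx | hx <;> rcases hy with hy | hy
  · exact hK hx hy hne
  · by_cases h : γ' x = x
    · exact hK' h hy hne
    · by_contra hnadj
      exact mixed_false himp hsep hγ hγ' hcomm hp hord' hpk hK hx h hy hne hnadj
  · by_cases h : γ' y = y
    · exact hK' hx h hne
    · by_contra hnadj
      exact (mixed_false himp hsep hγ hγ' hcomm hp hord' hpk hK hy h hx hne.symm
        (fun ha => hnadj ha.symm)).elim
  · exact hK' hx hy hne
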